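/- arXiv:2508.10323 — 4 statements merged into one kernel-verified Lean document; each statement's English description precedes it below -/
import Mathlib

section
/- The rig $\mathbb{W}(\mathbb{L})$ is not of characteristic one: $\overline{0} \oplus_{\mathbb{W}(\mathbb{L})} \overline{0} \neq \overline{0}$. Specifically, $(\overline{0} \oplus_{\mathbb{W}(\mathbb{L})} \overline{0})(m_{(2,1)}) = 0$ while $\overline{0}(m_{(2,1)}) = \infty$. -/
open scoped Classical ENNReal
open Tropical

noncomputable section

/-- The Lawvere quantale `𝕃 = [0,∞]` viewed as a rig: addition is `min`, multiplication is `+`. -/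
abbrev Trop : Type := Tropical ℝ≥0∞

/-- Coefficient of a formal power series in infinitely many variables. -/
def cf {σ : Type} (φ : MvPowerSeries σ ℕ) (d : σ →₀ ℕ) : ℕ := MvPowerSeries.coeff d φ

/-- The multiset of nonzero entries of an exponent vector. -/
def parts (d : ℕ →₀ ℕ) : Multiset ℕ := d.support.val.map d

lemma zero_not_mem_parts (d : ℕ →₀ ℕ) : (0 : ℕ) ∉ parts d := by
  intro h
  obtain ⟨a, ha, ha0⟩ := Multiset.mem_map.mp h
  exact Finsupp.mem_support_iff.mp (Finset.mem_val.mp ha) ha0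

/-- Partitions: multisets of positive natural numbers. -/
def Ptn : Type := {s : Multiset ℕ // (0 : ℕ) ∉ s}

/-- The monomial symmetric function `m_λ`, as a symmetric power series of bounded degree
in the variables `x_0, x_1, x_2, …`. -/
def mfun (l : Multiset ℕ) : MvPowerSeries ℕ ℕ := fun d => if parts d = l then 1 else 0

/-- `Λ`, the rig of symmetric functions with coefficients in `ℕ`: the subsemiring of
power series generated by the monomial symmetric functions. -/
def Lam : Subsemiring (MvPowerSeries ℕ ℕ) :=
  Subsemiring.closure (Set.range fun l : Ptn => mfun l.1)

/-- `m_λ` as an element of `Λ`. -/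
def mP (l : Ptn) : Lam := ⟨mfun l.1, Subsemiring.subset_closure (Set.mem_range_self l)⟩

/-- The one-part partition `(n)`. -/
def pnat (n : ℕ) (hn : 0 < n) : Ptn := ⟨{n}, fun h => hn.ne' (Multiset.mem_singleton.mp h).symm⟩

/-- The Witt vectors of the Lawvere quantale: rig homomorphisms `Λ → 𝕃`. -/
abbrev WL := Lam →+* Trop

/-- Row margin of an exponent vector on `ℕ × ℕ`. -/
def rowM (e : (ℕ × ℕ) →₀ ℕ) : ℕ →₀ ℕ := e.mapDomain Prod.fst
/-- Column margin of an exponent vector on `ℕ × ℕ`. -/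
def colM (e : (ℕ × ℕ) →₀ ℕ) : ℕ →₀ ℕ := e.mapDomain Prod.snd

/-- The elementary tensor `a ⊗ b` in `Λ ⊗ Λ`, realized as a power series on variables
`x_i ⊗ x_j` indexed by `ℕ × ℕ`. -/
def tens (a b : MvPowerSeries ℕ ℕ) : MvPowerSeries (ℕ × ℕ) ℕ :=
  fun e => cf a (rowM e) * cf b (colM e)

/-- Comultiplication `Δ^×`: substitute the family `x_i ⊗ x_j` for the variables,
along a bijection `ℕ ≃ ℕ × ℕ`. -/
def Dmul (eqt : ℕ ≃ ℕ × ℕ) (φ : MvPowerSeries ℕ ℕ) : MvPowerSeries (ℕ × ℕ) ℕ :=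
  fun e => cf φ (Finsupp.equivMapDomain eqt.symm e)

/-- Left margin of an exponent vector on `ℕ ⊕ ℕ`. -/
def lM (e : (ℕ ⊕ ℕ) →₀ ℕ) : ℕ →₀ ℕ := Finsupp.comapDomain Sum.inl e Sum.inl_injective.injOn
/-- Right margin of an exponent vector on `ℕ ⊕ ℕ`. -/
def rM (e : (ℕ ⊕ ℕ) →₀ ℕ) : ℕ →₀ ℕ := Finsupp.comapDomain Sum.inr e Sum.inr_injective.injOn

/-- The elementary tensor `a ⊗ b` realized as a power series on `ℕ ⊕ ℕ`. -/
def tensP (a b : MvPowerSeries ℕ ℕ) : MvPowerSeries (ℕ ⊕ ℕ) ℕ :=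
  fun e => cf a (lM e) * cf b (rM e)

/-- Coaddition `Δ^+`: substitute `x_i ⊗ 1` and `1 ⊗ x_i` for the variables,
along a bijection `ℕ ≃ ℕ ⊕ ℕ`. -/
def Dadd (eqp : ℕ ≃ ℕ ⊕ ℕ) (φ : MvPowerSeries ℕ ℕ) : MvPowerSeries (ℕ ⊕ ℕ) ℕ :=
  fun e => cf φ (Finsupp.equivMapDomain eqp.symm e)

/-- The order on `𝕎(𝕃)`: `f ≤ g` iff `g (m_λ) ≤ f (m_λ)` (usual order on `[0,∞]`)
for every partition `λ ∈ ℙ`. -/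
def leF (F G : Lam → Trop) : Prop :=
  ∀ l : Ptn, l.1 ≠ 0 → untrop (G (mP l)) ≤ untrop (F (mP l))

/-- Witt multiplication: `(f ⊗ g)(φ) = min` of `f(m_μ) + g(m_μ')` over the pairs `(μ, μ')`
occurring in `Δ^×(φ)`. -/
def wmulF (eqt : ℕ ≃ ℕ × ℕ) (F G : Lam → Trop) : Lam → Trop := fun φ =>
  trop (sInf {x : ℝ≥0∞ | ∃ e, cf (Dmul eqt (φ : MvPowerSeries ℕ ℕ)) e ≠ 0 ∧
    x = untrop (F (mP ⟨parts (rowM e), zero_not_mem_parts _⟩)) +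
        untrop (G (mP ⟨parts (colM e), zero_not_mem_parts _⟩))})

/-- Witt addition: `(f ⊕ g)(φ) = min` of `f(m_μ) + g(m_μ')` over the pairs `(μ, μ')`
occurring in `Δ^+(φ)`. -/
def waddF (eqp : ℕ ≃ ℕ ⊕ ℕ) (F G : Lam → Trop) : Lam → Trop := fun φ =>
  trop (sInf {x : ℝ≥0∞ | ∃ e, cf (Dadd eqp (φ : MvPowerSeries ℕ ℕ)) e ≠ 0 ∧
    x = untrop (F (mP ⟨parts (lM e), zero_not_mem_parts _⟩)) +
        untrop (G (mP ⟨parts (rM e), zero_not_mem_parts _⟩))})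

/-- Specification of the multiplicative unit `0̄` of `𝕎(𝕃)`:
`0̄(m_(n)) = 0` for one-part partitions and `0̄(m_λ) = ∞` otherwise. -/
def zbar (z : WL) : Prop :=
  ∀ l : Ptn, z (mP l) = if l.1.card ≤ 1 then trop (0 : ℝ≥0∞) else trop (⊤ : ℝ≥0∞)

/-- The partition `(2,1)`. -/
def p21 : Ptn := ⟨{2, 1}, by decide⟩

lemma parts_single_add_single {a b m n : ℕ} (hab : a ≠ b) (hm : m ≠ 0) (hn : n ≠ 0) :
    parts (Finsupp.single a m + Finsupp.single b n) = {m, n} := by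
  have hdisj := (Finsupp.support_single_disjoint hm hn).mpr hab
  rw [parts, Finsupp.support_add_eq hdisj, Finsupp.support_single _ hm,
    Finsupp.support_single _ hn, ← Finset.insert_eq,
    Finset.insert_val_of_notMem (by simpa using hab)]
  simp [Finsupp.single_apply, hab]

lemma parts_single (a : ℕ) {n : ℕ} (hn : n ≠ 0) : parts (Finsupp.single a n) = {n} := by
  simp [parts, Finsupp.support_single _ hn]

lemma lM_single_inl_add_single_inr (i j m n : ℕ) :
    lM (Finsupp.single (Sum.inl i) m + Finsupp.single (Sum.inr j) n) = Finsupp.single i m := by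
  ext k
  simp [lM, Finsupp.single_apply]

lemma rM_single_inl_add_single_inr (i j m n : ℕ) :
    rM (Finsupp.single (Sum.inl i) m + Finsupp.single (Sum.inr j) n) = Finsupp.single j n := by
  ext k
  simp [rM, Finsupp.single_apply]

/-- The term `m_(m) ⊗ m_(n)` of `Δ^+(m_(m,n))`, seen at the monomial `x_i^m ⊗ x_j^n`. -/
lemma cf_Dadd_mfun_pair (eqp : ℕ ≃ ℕ ⊕ ℕ) {m n : ℕ} (hm : m ≠ 0) (hn : n ≠ 0) (i j : ℕ) :
    cf (Dadd eqp (mfun {m, n})) (Finsupp.single (Sum.inl i) m + Finsupp.single (Sum.inr j) n)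
      = 1 := by
  have hij : eqp.symm (Sum.inl i) ≠ eqp.symm (Sum.inr j) := by simp
  simp only [Dadd, cf, MvPowerSeries.coeff_apply, mfun, Finsupp.equivMapDomain_eq_mapDomain,
    Finsupp.mapDomain_add, Finsupp.mapDomain_single, parts_single_add_single hij hm hn, if_true]

lemma untrop_waddF_le (eqp : ℕ ≃ ℕ ⊕ ℕ) (F G : Lam → Trop) (φ : Lam) (e : (ℕ ⊕ ℕ) →₀ ℕ)
    (he : cf (Dadd eqp (φ : MvPowerSeries ℕ ℕ)) e ≠ 0) :
    untrop (waddF eqp F G φ) ≤ untrop (F (mP ⟨parts (lM e), zero_not_mem_parts _⟩)) +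
      untrop (G (mP ⟨parts (rM e), zero_not_mem_parts _⟩)) :=
  sInf_le ⟨e, he, rfl⟩

namespace zbar

lemma apply_of_card_le_one {z : WL} (hz : zbar z) {l : Ptn} (hl : l.1.card ≤ 1) :
    z (mP l) = trop 0 := by
  simp [hz l, hl]

lemma apply_of_one_lt_card {z : WL} (hz : zbar z) {l : Ptn} (hl : 1 < l.1.card) :
    z (mP l) = trop ⊤ := by
  simp [hz l, hl.not_ge]

end zbar

/-- The rig `𝕎(𝕃)` is not of characteristic one: `0̄ ⊕ 0̄ ≠ 0̄`. Specifically
`(0̄ ⊕ 0̄)(m_(2,1)) = 0` while `0̄(m_(2,1)) = ∞`. -/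
theorem WL_not_char_one (eqp : ℕ ≃ ℕ ⊕ ℕ) (z : WL) (hz : zbar z) :
    waddF eqp ⇑z ⇑z (mP p21) = trop (0 : ℝ≥0∞) ∧
    z (mP p21) = trop (⊤ : ℝ≥0∞) ∧
    waddF eqp ⇑z ⇑z ≠ ⇑z := by
  have hz21 : z (mP p21) = trop ⊤ := hz.apply_of_one_lt_card (by simp [p21])
  set e : (ℕ ⊕ ℕ) →₀ ℕ := Finsupp.single (Sum.inl 0) 2 + Finsupp.single (Sum.inr 0) 1
  have he : cf (Dadd eqp (mP p21 : MvPowerSeries ℕ ℕ)) e ≠ 0 := by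
    change cf (Dadd eqp (mfun {2, 1})) e ≠ 0
    rw [cf_Dadd_mfun_pair eqp two_ne_zero one_ne_zero]
    exact one_ne_zero
  have hzl : z (mP ⟨parts (lM e), zero_not_mem_parts _⟩) = trop 0 :=
    hz.apply_of_card_le_one <| by
      simp [e, lM_single_inl_add_single_inr, parts_single _ two_ne_zero]
  have hzr : z (mP ⟨parts (rM e), zero_not_mem_parts _⟩) = trop 0 :=
    hz.apply_of_card_le_one <| by
      simp [e, rM_single_inl_add_single_inr, parts_single _ one_ne_zero]
  have hsum : waddF eqp z z (mP p21) = trop 0 := by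
    have := untrop_waddF_le eqp z z (mP p21) e he
    rw [hzl, hzr, untrop_trop, add_zero, nonpos_iff_eq_zero] at this
    rw [← trop_untrop (waddF eqp z z (mP p21)), this]
  refine ⟨hsum, hz21, fun h => ?_⟩
  have := congrFun h (mP p21)
  rw [hsum, hz21] at this
  exact ENNReal.zero_ne_top (trop_injective this)

end
end

section
/- Let $(X,d)$ be a $\mathbb{W}(\mathbb{L})$-category, and for $n \in \mathbb{N}_{>0}$ define $d_n(x,y) := d(x,y)(h_n)$ where $h_n$ is the $n$-th complete homogeneous symmetric function. Then $(X, d_n)$ is an $\mathbb{L}$-category: $d_n(x,x) = 0$ and $d_n(x,z) \leq d_n(x,y) + d_n(y,z)$; in fact $(d(x,y) \otimes_{\mathbb{W}(\mathbb{L})} d(y,z))(h_n) = d_n(x,y) + d_n(y,z)$. -/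
open scoped Classical ENNReal
open Tropical

noncomputable section

/-!
Since `h_n = ∑_{|λ|=n} m_λ` and a Witt vector is a rig homomorphism into `([0,∞], min, +)`,
`f(h_n)` is the minimum of the `f(m_λ)` over the partitions `λ` of `n`. The monomials of
`Δ^×(h_n)` are the matrices of total size `n`, and any two exponent vectors of degree `n` are the
row and column margins of such a matrix; hence `(f ⊗ g)(h_n) = f(h_n) + g(h_n)`.
Then `d_n(x,x) ≤ d_{(n)}(x,x) ≤ 0̄(m_{(n)}) = 0`, and if `λ` is the partition formed by the
entries of a matrix whose margins realize `d_n(x,y)` and `d_n(y,z)`, then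
`d_n(x,z) ≤ d_λ(x,z) ≤ (d(x,y) ⊗ d(y,z))(m_λ) ≤ d_n(x,y) + d_n(y,z)`.
-/
theorem exists_mapDomain_fst_snd_eq {α β : Type*} (f : α →₀ ℕ) (g : β →₀ ℕ)
    (h : f.degree = g.degree) :
    ∃ e : α × β →₀ ℕ, e.mapDomain Prod.fst = f ∧ e.mapDomain Prod.snd = g := by
  -- list both multisets of variables and pair them up position by position
  have hlen : f.toMultiset.toList.length = g.toMultiset.toList.length := by
    rw [Multiset.length_toList, Multiset.length_toList, Finsupp.card_toMultiset,
      Finsupp.card_toMultiset]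
    exact h
  refine ⟨Multiset.toFinsupp ↑(f.toMultiset.toList.zip g.toMultiset.toList), ?_, ?_⟩ <;>
    apply Multiset.toFinsupp.symm.injective <;>
    rw [Multiset.toFinsupp_symm_apply, ← Finsupp.toMultiset_map, Multiset.toFinsupp_toMultiset,
      Multiset.map_coe]
  · rw [List.map_fst_zip hlen.le, Multiset.coe_toList, Multiset.toFinsupp_symm_apply]
  · rw [List.map_snd_zip hlen.ge, Multiset.coe_toList, Multiset.toFinsupp_symm_apply]

theorem exists_parts_eq (s : Multiset ℕ) (hs : 0 ∉ s) : ∃ f : ℕ →₀ ℕ, parts f = s := by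
  induction s using Quotient.inductionOn with | h l => ?_
  refine ⟨l.toFinsupp, ?_⟩
  have hsupp : l.toFinsupp.support = Finset.range l.length := by
    rw [List.toFinsupp_support, Finset.filter_true_of_mem]
    intro i hi
    rw [List.getD_eq_getElem _ _ (Finset.mem_range.mp hi)]
    exact fun h0 => hs (h0 ▸ List.getElem_mem _)
  rw [parts, hsupp]
  show (((List.range l.length).map (fun i => l.getD i 0) : List ℕ) : Multiset ℕ) = l
  congr 1
  exact List.ext_getElem (by simp) fun i _ hi => by simp [hi]

def Nat.Partition.toPtn {n : ℕ} (p : n.Partition) : Ptn :=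
  ⟨p.parts, fun h => lt_irrefl 0 (p.parts_pos h)⟩

theorem Nat.Partition.parts_ne_zero {n : ℕ} (hn : n ≠ 0) (p : n.Partition) : p.parts ≠ 0 :=
  fun h => hn (by rw [← p.parts_sum, h, Multiset.sum_zero])

def partitionOfDegreeEq {n : ℕ} (e : ℕ →₀ ℕ) (he : e.degree = n) : n.Partition :=
  ⟨parts e, fun h => Nat.pos_of_ne_zero fun h0 => zero_not_mem_parts e (h0 ▸ h), he⟩

theorem untrop_wmulF_le (eqt : ℕ ≃ ℕ × ℕ) (F G : Lam → Trop) {φ : Lam} {e : ℕ × ℕ →₀ ℕ}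
    (he : cf (Dmul eqt (φ : MvPowerSeries ℕ ℕ)) e ≠ 0) :
    untrop (wmulF eqt F G φ) ≤ untrop (F (mP ⟨parts (rowM e), zero_not_mem_parts _⟩)) +
      untrop (G (mP ⟨parts (colM e), zero_not_mem_parts _⟩)) :=
  sInf_le ⟨e, he, rfl⟩

theorem cf_Dmul_mP_ne_zero (eqt : ℕ ≃ ℕ × ℕ) (e : ℕ × ℕ →₀ ℕ) :
    cf (Dmul eqt (mP ⟨parts (Finsupp.equivMapDomain eqt.symm e), zero_not_mem_parts _⟩ : Lam)) e
      ≠ 0 :=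
  (if_pos rfl).trans_ne one_ne_zero

section CompleteHomogeneous

variable {n : ℕ} {hN : Lam}
  (hh : ∀ e : ℕ →₀ ℕ, cf (hN : MvPowerSeries ℕ ℕ) e = if e.degree = n then 1 else 0)
include hh

theorem eq_sum_mP : hN = ∑ p : n.Partition, mP p.toPtn := by
  apply Subtype.ext
  ext e
  change cf (hN : MvPowerSeries ℕ ℕ) e = _
  rw [hh, AddSubmonoidClass.coe_finsetSum, map_sum]
  change _ = ∑ p : n.Partition, if parts e = p.parts then 1 else 0
  by_cases he : e.degree = n
  · rw [if_pos he, Finset.sum_eq_single (partitionOfDegreeEq e he)]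
    · exact (if_pos rfl).symm
    · intro p _ hp
      exact if_neg fun h => hp (Nat.Partition.ext h.symm)
    · exact fun h => absurd (Finset.mem_univ _) h
  · rw [if_neg he]
    refine (Finset.sum_eq_zero fun p _ => if_neg fun h => he ?_).symm
    rw [← p.parts_sum, ← h]
    rfl

theorem untrop_apply_eq_inf (F : WL) :
    untrop (F hN) = Finset.univ.inf fun p : n.Partition => untrop (F (mP p.toPtn)) := by
  rw [eq_sum_mP hh, map_sum, Finset.untrop_sum']
  rfl

theorem untrop_apply_le (F : WL) (p : n.Partition) : untrop (F hN) ≤ untrop (F (mP p.toPtn)) :=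
  (untrop_apply_eq_inf hh F).trans_le (Finset.inf_le (Finset.mem_univ p))

theorem exists_partition_apply_eq (F : WL) : ∃ p : n.Partition, F hN = F (mP p.toPtn) := by
  obtain ⟨p, -, hp⟩ := Finset.exists_mem_eq_inf (Finset.univ : Finset n.Partition)
    Finset.univ_nonempty fun p => untrop (F (mP p.toPtn))
  exact ⟨p, untrop_injective ((untrop_apply_eq_inf hh F).trans hp)⟩

theorem cf_Dmul_ne_zero_iff (eqt : ℕ ≃ ℕ × ℕ) (e : ℕ × ℕ →₀ ℕ) :
    cf (Dmul eqt (hN : MvPowerSeries ℕ ℕ)) e ≠ 0 ↔ e.degree = n := by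
  change cf (hN : MvPowerSeries ℕ ℕ) (Finsupp.equivMapDomain eqt.symm e) ≠ 0 ↔ _
  simp [hh, Finsupp.equivMapDomain_eq_mapDomain]

theorem exists_margins_apply_eq (F G : WL) : ∃ e : ℕ × ℕ →₀ ℕ, e.degree = n ∧
    F (mP ⟨parts (rowM e), zero_not_mem_parts _⟩) = F hN ∧
    G (mP ⟨parts (colM e), zero_not_mem_parts _⟩) = G hN := by
  obtain ⟨p, hp⟩ := exists_partition_apply_eq hh F
  obtain ⟨q, hq⟩ := exists_partition_apply_eq hh G
  obtain ⟨f, hf⟩ := exists_parts_eq p.parts p.toPtn.2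
  obtain ⟨g, hg⟩ := exists_parts_eq q.parts q.toPtn.2
  have hfn : f.degree = n := by rw [← p.parts_sum, ← hf]; rfl
  have hgn : g.degree = n := by rw [← q.parts_sum, ← hg]; rfl
  obtain ⟨e, rfl, rfl⟩ := exists_mapDomain_fst_snd_eq f g (hfn.trans hgn.symm)
  refine ⟨e, by rwa [Finsupp.degree_mapDomain] at hfn, ?_, ?_⟩
  · rw [show (⟨parts (rowM e), _⟩ : Ptn) = p.toPtn from Subtype.ext hf, hp]
  · rw [show (⟨parts (colM e), _⟩ : Ptn) = q.toPtn from Subtype.ext hg, hq]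

theorem wmulF_apply (eqt : ℕ ≃ ℕ × ℕ) (F G : WL) :
    wmulF eqt F G hN = trop (untrop (F hN) + untrop (G hN)) := by
  apply untrop_injective
  rw [untrop_trop]
  apply le_antisymm
  · obtain ⟨e, he, hF, hG⟩ := exists_margins_apply_eq hh F G
    rw [← hF, ← hG]
    exact untrop_wmulF_le eqt F G ((cf_Dmul_ne_zero_iff hh eqt e).mpr he)
  · refine le_sInf ?_
    rintro _ ⟨e, he, rfl⟩
    have hdeg := (cf_Dmul_ne_zero_iff hh eqt e).mp he
    exact add_le_add
      (untrop_apply_le hh F (partitionOfDegreeEq _ ((Finsupp.degree_mapDomain _ _).trans hdeg)))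
      (untrop_apply_le hh G (partitionOfDegreeEq _ ((Finsupp.degree_mapDomain _ _).trans hdeg)))

end CompleteHomogeneous

/-- For any `𝕎(𝕃)`-category `(X, d)` and `n ∈ ℕ_{>0}`, setting
`d_n(x,y) := d(x,y)(h_n)` where `h_n = Σ_{|λ|=n} m_λ` is the `n`-th complete homogeneous
symmetric function, the pair `(X, d_n)` is an `𝕃`-category: `d_n(x,x) = 0` and
`d_n(x,z) ≤ d_n(x,y) + d_n(y,z)`; in fact
`(d(x,y) ⊗ d(y,z))(h_n) = d_n(x,y) + d_n(y,z)`. -/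
theorem complete_homogeneous_L_category (eqt : ℕ ≃ ℕ × ℕ) (X : Type) (d : X → X → WL)
    (hid : ∃ z : WL, zbar z ∧ ∀ x : X, leF ⇑z ⇑(d x x))
    (hcomp : ∀ x y w : X, leF (wmulF eqt ⇑(d x y) ⇑(d y w)) ⇑(d x w))
    (n : ℕ) (hn : 0 < n) (hN : Lam)
    (hh : ∀ e : ℕ →₀ ℕ, cf (hN : MvPowerSeries ℕ ℕ) e =
      if (e.sum fun _ k => k) = n then 1 else 0) :
    (∀ x : X, d x x hN = trop (0 : ℝ≥0∞)) ∧
    (∀ x y w : X, wmulF eqt ⇑(d x y) ⇑(d y w) hN =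
      trop (untrop (d x y hN) + untrop (d y w hN))) ∧
    (∀ x y w : X, untrop (d x w hN) ≤ untrop (d x y hN) + untrop (d y w hN)) := by
  refine ⟨fun x => ?_, fun x y w => wmulF_apply hh eqt _ _, fun x y w => ?_⟩
  · obtain ⟨z, hz, hzd⟩ := hid
    have hparts := Nat.Partition.indiscrete_parts hn.ne'
    have hz_one : untrop (z (mP (Nat.Partition.indiscrete n).toPtn)) = 0 := by
      rw [hz]; simp [Nat.Partition.toPtn, hparts]
    apply untrop_injective
    rw [untrop_trop]
    refine le_antisymm ?_ zero_le
    calc untrop (d x x hN) ≤ untrop (d x x (mP (Nat.Partition.indiscrete n).toPtn)) :=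
          untrop_apply_le hh _ _
      _ ≤ 0 := (hzd x _ (Nat.Partition.parts_ne_zero hn.ne' _)).trans hz_one.le
  · obtain ⟨e, he, hF, hG⟩ := exists_margins_apply_eq hh (d x y) (d y w)
    let l := partitionOfDegreeEq (Finsupp.equivMapDomain eqt.symm e)
      (by rw [Finsupp.equivMapDomain_eq_mapDomain, Finsupp.degree_mapDomain, he])
    calc untrop (d x w hN) ≤ untrop (d x w (mP l.toPtn)) := untrop_apply_le hh _ _
      _ ≤ untrop (wmulF eqt (d x y) (d y w) (mP l.toPtn)) :=
          hcomp x y w _ (Nat.Partition.parts_ne_zero hn.ne' l)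
      _ ≤ untrop (d x y hN) + untrop (d y w hN) := by
        rw [← hF, ← hG]; exact untrop_wmulF_le eqt _ _ (cf_Dmul_mP_ne_zero eqt e)

end
end

section
/- The map $\theta: \mathbb{L} \to \mathbb{W}(\mathbb{L})$, $r \mapsto \theta(r)$ with $\theta(r)(m_{(n)}) = nr$ and $\theta(r)(m_\lambda) = \infty$ otherwise, is a monoidal functor of monoidal posets: it is monotone, $\theta(0) = \overline{0}$, and $\theta(r) \otimes_{\mathbb{W}(\mathbb{L})} \theta(r') = \theta(r + r')$ for all $r, r' \in [0,\infty]$. -/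
open scoped Classical ENNReal
open Tropical

noncomputable section

/-- Specification of `θ(r) ∈ 𝕎(𝕃)`: `θ(r)(m_(n)) = n·r` for one-part partitions and
`θ(r)(m_λ) = ∞` for all other nonempty partitions. -/
def thetaSpec (r : ℝ≥0∞) (F : WL) : Prop :=
  ∀ l : Ptn, l.1 ≠ 0 →
    F (mP l) = if l.1.card = 1 then trop ((l.1.sum : ℝ≥0∞) * r) else trop (⊤ : ℝ≥0∞)

/-! A rig homomorphism `F : Λ → 𝕃` with `thetaSpec s F` is determined on all of `Λ`. The set of
exponents `k` with `x₀ᵏ` occurring in `φ` turns sums into unions and products into sumsets, while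
`F` turns them into minima and sums; on a generator `m_λ` it is `{n}` if `λ = (n)` and empty
otherwise. Hence `F φ` is the infimum of `k·s` over that set, for every `φ ∈ Λ`; this gives
uniqueness, and with it `θ(0) = 0̄`. In `θ(r) ⊗ θ(r')`, the term indexed by an exponent `e` on
`ℕ × ℕ` is finite only when both margins of `e` have one part, i.e. `e = k·δ_p`; by symmetry of
`φ` such a term occurs in `Δ^×(φ)` iff `x₀ᵏ` occurs in `φ`, and it equals `k r + k r'`. -/

open scoped Pointwise

lemma cf_add {σ : Type} (x y : MvPowerSeries σ ℕ) (d : σ →₀ ℕ) :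
    cf (x + y) d = cf x d + cf y d := rfl

lemma cf_one {σ : Type} (d : σ →₀ ℕ) : cf (1 : MvPowerSeries σ ℕ) d = if d = 0 then 1 else 0 :=
  MvPowerSeries.coeff_one d

lemma cf_mul_single {σ : Type} (x y : MvPowerSeries σ ℕ) (i : σ) (k : ℕ) :
    cf (x * y) (Finsupp.single i k) =
      ∑ p ∈ Finset.HasAntidiagonal.antidiagonal k,
        cf x (Finsupp.single i p.1) * cf y (Finsupp.single i p.2) := by
  rw [cf, MvPowerSeries.coeff_mul, Finsupp.antidiagonal_single, Finset.sum_map]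
  rfl

lemma parts_eq_zero_iff {d : ℕ →₀ ℕ} : parts d = 0 ↔ d = 0 := by
  rw [parts, Multiset.map_eq_zero, Finset.val_eq_zero, Finsupp.support_eq_empty]

lemma card_parts (d : ℕ →₀ ℕ) : Multiset.card (parts d) = d.support.card :=
  Multiset.card_map _ _

lemma parts_single_s15 {i k : ℕ} (hk : k ≠ 0) : parts (Finsupp.single i k) = {k} := by
  simp [parts, Finsupp.support_single _ hk]

lemma sum_parts (d : ℕ →₀ ℕ) : (parts d).sum = d.degree :=
  Finset.sum_map_val _ _

lemma card_support_single_le_one {α M : Type*} [Zero M] (a : α) (b : M) :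
    (Finsupp.single a b).support.card ≤ 1 :=
  (Finset.card_le_card Finsupp.support_single_subset).trans (Finset.card_singleton a).le

lemma parts_single_eq_singleton_iff {i k n : ℕ} (hn : n ≠ 0) :
    parts (Finsupp.single i k) = {n} ↔ k = n := by
  rcases eq_or_ne k 0 with rfl | hk
  · rw [Finsupp.single_zero, parts_eq_zero_iff.mpr rfl]
    simp [hn.symm]
  · rw [parts_single_s15 hk, Multiset.singleton_inj]

lemma cf_mfun (l : Multiset ℕ) (d : ℕ →₀ ℕ) : cf (mfun l) d = if parts d = l then 1 else 0 :=
  rfl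

lemma mfun_zero : mfun 0 = 1 := by
  ext d
  show cf (mfun 0) d = cf 1 d
  simp only [cf_mfun, cf_one, parts_eq_zero_iff]
  congr

lemma mP_eq_one {l : Ptn} (h : l.1 = 0) : mP l = 1 :=
  Subtype.ext (show mfun l.1 = 1 by rw [h, mfun_zero])

lemma cf_single_eq_of_mem_Lam {φ : MvPowerSeries ℕ ℕ} (hφ : φ ∈ Lam) (i k : ℕ) :
    cf φ (Finsupp.single i k) = cf φ (Finsupp.single 0 k) := by
  induction hφ using Subsemiring.closure_induction generalizing k with
  | mem x hx =>
    obtain ⟨l, rfl⟩ := hx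
    rcases eq_or_ne k 0 with rfl | hk
    · simp only [Finsupp.single_zero]
    · rw [cf_mfun, cf_mfun, parts_single_s15 hk, parts_single_s15 hk]
  | zero => rfl
  | one => simp only [cf_one, Finsupp.single_eq_zero]
  | add x y _ _ ihx ihy => rw [cf_add, cf_add, ihx, ihy]
  | mul x y _ _ ihx ihy =>
    rw [cf_mul_single, cf_mul_single]
    exact Finset.sum_congr rfl fun p _ => by rw [ihx, ihy]

def x0Exponents (φ : MvPowerSeries ℕ ℕ) : Set ℕ := {k | cf φ (Finsupp.single 0 k) ≠ 0}

lemma x0Exponents_zero : x0Exponents 0 = ∅ :=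
  Set.eq_empty_of_forall_notMem fun _ hk => hk rfl

lemma x0Exponents_one : x0Exponents 1 = {0} := by
  ext k
  simp [x0Exponents, cf_one]

lemma x0Exponents_add (x y : MvPowerSeries ℕ ℕ) :
    x0Exponents (x + y) = x0Exponents x ∪ x0Exponents y := by
  ext k
  simp only [x0Exponents, Set.mem_ofPred_eq, Set.mem_union, cf_add]
  omega

lemma x0Exponents_mul (x y : MvPowerSeries ℕ ℕ) :
    x0Exponents (x * y) = x0Exponents x + x0Exponents y := by
  ext k
  simp only [x0Exponents, Set.mem_ofPred_eq, Set.mem_add, cf_mul_single, ne_eq,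
    Finset.sum_eq_zero_iff, Finset.HasAntidiagonal.mem_antidiagonal, Nat.mul_eq_zero, not_forall,
    not_or, Prod.exists]
  constructor
  · rintro ⟨a, b, rfl, ha, hb⟩
    exact ⟨a, ha, b, hb, rfl⟩
  · rintro ⟨a, ha, b, hb, rfl⟩
    exact ⟨a, b, rfl, ha, hb⟩

lemma x0Exponents_mfun {l : Multiset ℕ} (hl0 : (0 : ℕ) ∉ l) (hl : l ≠ 0) :
    x0Exponents (mfun l) = if Multiset.card l = 1 then {l.sum} else ∅ := by
  ext k
  simp only [x0Exponents, Set.mem_ofPred_eq, cf_mfun, ne_eq, ite_eq_right_iff, one_ne_zero,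
    imp_false, not_not]
  split_ifs with hc
  · obtain ⟨n, rfl⟩ := Multiset.card_eq_one.mp hc
    rw [Multiset.sum_singleton, Set.mem_singleton_iff,
      parts_single_eq_singleton_iff fun h => hl0 (h ▸ Multiset.mem_singleton_self n)]
  · simp only [Set.mem_empty_iff_false, iff_false]
    rintro rfl
    have := card_parts (Finsupp.single 0 k) ▸ card_support_single_le_one 0 k
    have : Multiset.card (parts (Finsupp.single 0 k)) ≠ 0 := by simpa using hl
    omega

lemma biInf_add_set {M : Type*} [Add M] (f : M → ℝ≥0∞) (hf : ∀ a b, f (a + b) = f a + f b)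
    (A B : Set M) : ⨅ x ∈ A + B, f x = (⨅ a ∈ A, f a) + ⨅ b ∈ B, f b := by
  rw [← Set.image2_add, iInf_image2, ENNReal.iInf₂_add]
  simp only [ENNReal.add_iInf₂, hf]

lemma eq_trop_biInf_of_thetaSpec {s : ℝ≥0∞} {F : WL} (hF : thetaSpec s F)
    {φ : MvPowerSeries ℕ ℕ} (hφ : φ ∈ Lam) :
    F ⟨φ, hφ⟩ = trop (⨅ k ∈ x0Exponents φ, (k : ℝ≥0∞) * s) := by
  induction hφ using Subsemiring.closure_induction with
  | mem x hx =>
    obtain ⟨l, rfl⟩ := hx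
    change F (mP l) = trop (⨅ k ∈ x0Exponents (mfun l.1), (k : ℝ≥0∞) * s)
    rcases eq_or_ne l.1 0 with h0 | h0
    · rw [mP_eq_one h0, map_one, h0, mfun_zero, x0Exponents_one, iInf_singleton, Nat.cast_zero,
        zero_mul, trop_zero]
    · rw [hF l h0, x0Exponents_mfun l.2 h0]
      split_ifs
      · rw [iInf_singleton]
      · rw [iInf_emptyset]
  | zero => rw [x0Exponents_zero, iInf_emptyset, trop_top]; exact map_zero F
  | one =>
    rw [x0Exponents_one, iInf_singleton, Nat.cast_zero, zero_mul, trop_zero]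
    exact map_one F
  | add x y hx hy ihx ihy =>
    change F (⟨x, hx⟩ + ⟨y, hy⟩) = _
    rw [map_add, ihx, ihy, x0Exponents_add, iInf_union, trop_min]
  | mul x y hx hy ihx ihy =>
    change F (⟨x, hx⟩ * ⟨y, hy⟩) = _
    rw [map_mul, ihx, ihy, x0Exponents_mul, biInf_add_set _ (fun a b => by push_cast; ring),
      trop_add]

lemma thetaSpec.unique {s : ℝ≥0∞} {F G : WL} (hF : thetaSpec s F) (hG : thetaSpec s G) :
    F = G :=
  RingHom.ext fun φ =>
    (eq_trop_biInf_of_thetaSpec hF φ.2).trans (eq_trop_biInf_of_thetaSpec hG φ.2).symm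

lemma thetaSpec.untrop_apply {s : ℝ≥0∞} {F : WL} (hF : thetaSpec s F) (l : Ptn) :
    untrop (F (mP l)) = if Multiset.card l.1 ≤ 1 then (l.1.sum : ℝ≥0∞) * s else ⊤ := by
  rcases eq_or_ne l.1 0 with h0 | h0
  · simp [mP_eq_one h0, h0]
  · have hc : Multiset.card l.1 ≠ 0 := by rwa [Ne, Multiset.card_eq_zero]
    rw [hF l h0]
    by_cases h1 : Multiset.card l.1 = 1
    · rw [if_pos h1, if_pos h1.le, untrop_trop]
    · rw [if_neg h1, if_neg (by omega), untrop_trop]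

lemma thetaSpec.untrop_apply_parts {s : ℝ≥0∞} {F : WL} (hF : thetaSpec s F) (d : ℕ →₀ ℕ) :
    untrop (F (mP ⟨parts d, zero_not_mem_parts d⟩)) =
      if d.support.card ≤ 1 then (d.degree : ℝ≥0∞) * s else ⊤ := by
  refine (hF.untrop_apply _).trans ?_
  change (if Multiset.card (parts d) ≤ 1 then ((parts d).sum : ℝ≥0∞) * s else ⊤) = _
  rw [card_parts, sum_parts]

lemma thetaSpec.leF {r r' : ℝ≥0∞} {F G : WL} (hF : thetaSpec r F) (hG : thetaSpec r' G)
    (h : r' ≤ r) : leF F G := by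
  intro l _
  rw [hF.untrop_apply, hG.untrop_apply]
  split_ifs
  exacts [mul_le_mul_right h _, le_rfl]

lemma thetaSpec_zero_of_zbar {z : WL} (hz : zbar z) : thetaSpec 0 z := by
  intro l hl
  have hc : Multiset.card l.1 ≠ 0 := by rwa [Ne, Multiset.card_eq_zero]
  rw [hz l, mul_zero]
  by_cases h1 : Multiset.card l.1 = 1
  · rw [if_pos h1, if_pos h1.le]
  · rw [if_neg h1, if_neg (by omega)]

lemma exists_eq_single_of_card_support_rowM_colM_le_one {e : (ℕ × ℕ) →₀ ℕ}
    (hrow : (rowM e).support.card ≤ 1) (hcol : (colM e).support.card ≤ 1) :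
    ∃ p k, e = Finsupp.single p k := by
  rw [rowM, Finsupp.mapDomain_support_of_subsingletonAddUnits] at hrow
  rw [colM, Finsupp.mapDomain_support_of_subsingletonAddUnits] at hcol
  refine Finsupp.card_support_le_one'.mp ?_
  calc e.support.card ≤ (e.support.image Prod.fst ×ˢ e.support.image Prod.snd).card :=
        Finset.card_le_card Finset.subset_product
    _ = (e.support.image Prod.fst).card * (e.support.image Prod.snd).card := Finset.card_product _ _
    _ ≤ 1 * 1 := Nat.mul_le_mul hrow hcol

lemma cf_Dmul_single_of_mem_Lam (eqt : ℕ ≃ ℕ × ℕ) {φ : MvPowerSeries ℕ ℕ} (hφ : φ ∈ Lam)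
    (p : ℕ × ℕ) (k : ℕ) : cf (Dmul eqt φ) (Finsupp.single p k) = cf φ (Finsupp.single 0 k) := by
  change cf φ (Finsupp.equivMapDomain eqt.symm (Finsupp.single p k)) = _
  rw [Finsupp.equivMapDomain_single, cf_single_eq_of_mem_Lam hφ]

lemma wmulF_eq_of_thetaSpec (eqt : ℕ ≃ ℕ × ℕ) {r r' : ℝ≥0∞} {F G H : WL} (hF : thetaSpec r F)
    (hG : thetaSpec r' G) (hH : thetaSpec (r + r') H) : wmulF eqt F G = H := by
  funext φ
  rw [wmulF, eq_trop_biInf_of_thetaSpec hH φ.2]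
  refine congrArg trop (le_antisymm ?_ ?_)
  · refine le_iInf₂ fun k hk => sInf_le ⟨Finsupp.single (eqt 0) k, ?_, ?_⟩
    · rwa [cf_Dmul_single_of_mem_Lam eqt φ.2]
    · rw [hF.untrop_apply_parts, hG.untrop_apply_parts, rowM, colM, Finsupp.mapDomain_single,
        Finsupp.mapDomain_single, if_pos (card_support_single_le_one _ _),
        if_pos (card_support_single_le_one _ _), Finsupp.degree_single, Finsupp.degree_single,
        mul_add]
  · refine le_sInf ?_
    rintro _ ⟨e, he, rfl⟩
    rw [hF.untrop_apply_parts, hG.untrop_apply_parts]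
    split_ifs with hrow hcol
    · obtain ⟨p, k, rfl⟩ := exists_eq_single_of_card_support_rowM_colM_le_one hrow hcol
      rw [cf_Dmul_single_of_mem_Lam eqt φ.2] at he
      rw [rowM, colM, Finsupp.mapDomain_single, Finsupp.mapDomain_single, Finsupp.degree_single,
        Finsupp.degree_single, ← mul_add]
      exact iInf₂_le k he
    all_goals simp

/-- The map `θ : 𝕃 → 𝕎(𝕃)` is a monoidal functor of monoidal posets: it is monotone
(for the Lawvere orders), `θ(0) = 0̄`, and `θ(r) ⊗ θ(r') = θ(r + r')`. -/
theorem theta_monoidal (eqt : ℕ ≃ ℕ × ℕ) (Θ : ℝ≥0∞ → WL) (hΘ : ∀ r, thetaSpec r (Θ r)) :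
    (∀ r r' : ℝ≥0∞, r' ≤ r → leF ⇑(Θ r) ⇑(Θ r')) ∧
    (∀ z : WL, zbar z → Θ 0 = z) ∧
    (∀ r r' : ℝ≥0∞, wmulF eqt ⇑(Θ r) ⇑(Θ r') = ⇑(Θ (r + r'))) := by
  exact ⟨fun r r' h => (hΘ r).leF (hΘ r') h,
    fun z hz => (hΘ 0).unique (thetaSpec_zero_of_zbar hz),
    fun r r' => wmulF_eq_of_thetaSpec eqt (hΘ r) (hΘ r') (hΘ (r + r'))⟩

end
end

section
/- The map $\theta: \mathbb{L} \to \mathbb{W}(\mathbb{L})$ does not preserve addition: there exist $r, r' \in [0,\infty]$ with $\theta(\min\{r,r'\}) \neq \theta(r) \oplus_{\mathbb{W}(\mathbb{L})} \theta(r')$. Specifically, $(\theta(r) \oplus_{\mathbb{W}(\mathbb{L})} \theta(r'))(m_{(2,1)}) = \min\{2r + r', r + 2r'\}$ while $\theta(\min\{r,r'\})(m_{(2,1)}) = \infty$, so for finite $r, r'$ these disagree. Consequently there is no rig homomorphism extension; $\theta$ is only monoidal. -/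
open scoped Classical ENNReal
open Tropical

noncomputable section

/-!
`Δ⁺(m_λ)` is the sum of the `m_μ ⊗ m_ν` over the splittings `λ = μ + ν`, so
`(θ(r) ⊕ θ(r'))(m_(2,1))` is the minimum of `θ(r)(m_μ) + θ(r')(m_ν)` over the four splittings
of `(2,1)`. The two splittings into one-part partitions give `2r + r'` and `r + 2r'`; the other
two involve `θ(m_(2,1)) = ∞`. Yet `θ(min r r')(m_(2,1)) = ∞` as well, and `2r + r'` is finite
for finite `r, r'`.
-/

lemma Finsupp.map_support_equivMapDomain {α β M : Type*} [Zero M] (f : α ≃ β) (e : α →₀ M) :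
    (e.equivMapDomain f).support.val.map (e.equivMapDomain f) = e.support.val.map e := by
  change (e.support.map f.toEmbedding).val.map _ = _
  rw [Finset.map_val, Multiset.map_map]
  exact Multiset.map_congr rfl fun a _ => by simp

lemma Finsupp.map_support_sumElim {α β M : Type*} [Zero M] (f : α →₀ M) (g : β →₀ M) :
    (f.sumElim g).support.val.map (f.sumElim g) = f.support.val.map f + g.support.val.map g := by
  simp [Finset.val_disjSum, Multiset.disjSum, Multiset.map_map, Function.comp_def]

lemma parts_lM_add_parts_rM (e : (ℕ ⊕ ℕ) →₀ ℕ) :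
    parts (lM e) + parts (rM e) = e.support.val.map e := by
  conv_rhs => rw [← Finsupp.comapDomain_sumElim_comapDomain e]
  exact (Finsupp.map_support_sumElim _ _).symm

lemma cf_Dadd_mfun (eqp : ℕ ≃ ℕ ⊕ ℕ) (l : Multiset ℕ) (e : (ℕ ⊕ ℕ) →₀ ℕ) :
    cf (Dadd eqp (mfun l)) e = if parts (lM e) + parts (rM e) = l then 1 else 0 := by
  rw [parts_lM_add_parts_rM, ← Finsupp.map_support_equivMapDomain eqp.symm]
  rfl

lemma waddF_mP (eqp : ℕ ≃ ℕ ⊕ ℕ) (F G : Lam → Trop) (l : Ptn) :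
    waddF eqp F G (mP l) = trop (sInf {x : ℝ≥0∞ | ∃ e, parts (lM e) + parts (rM e) = l.1 ∧
      x = untrop (F (mP ⟨parts (lM e), zero_not_mem_parts _⟩)) +
        untrop (G (mP ⟨parts (rM e), zero_not_mem_parts _⟩))}) := by
  simp only [waddF, mP, cf_Dadd_mfun, ne_eq, ite_eq_right_iff, one_ne_zero, imp_false, not_not]

lemma lM_sumElim (f g : ℕ →₀ ℕ) : lM (f.sumElim g) = f := Finsupp.comapDomain_inl_sumElim f g

lemma rM_sumElim (f g : ℕ →₀ ℕ) : rM (f.sumElim g) = g := Finsupp.comapDomain_inr_sumElim f g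

lemma mP_zero (h : (0 : ℕ) ∉ (0 : Multiset ℕ)) : mP ⟨0, h⟩ = 1 := by
  refine Subtype.ext (funext fun d => ?_)
  change (if parts d = 0 then 1 else 0) = MvPowerSeries.coeff d 1
  simp [MvPowerSeries.coeff_one, parts]

/-- `thetaSpec` leaves out `m_∅ = 1`, which every rig map sends to `1 = trop 0`. -/
def thetaVal (r : ℝ≥0∞) (s : Multiset ℕ) : ℝ≥0∞ :=
  if s = 0 then 0 else if s.card = 1 then (s.sum : ℝ≥0∞) * r else ⊤

lemma thetaVal_zero (r : ℝ≥0∞) : thetaVal r 0 = 0 := if_pos rfl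

lemma thetaVal_singleton (r : ℝ≥0∞) (n : ℕ) : thetaVal r {n} = n * r := by
  simp [thetaVal]

lemma thetaVal_of_two_le_card (r : ℝ≥0∞) {s : Multiset ℕ} (hs : 2 ≤ s.card) :
    thetaVal r s = ⊤ := by
  rw [thetaVal, if_neg (by rintro rfl; simp at hs), if_neg (by omega)]

lemma thetaSpec.untrop_apply_mP {r : ℝ≥0∞} {F : WL} (hF : thetaSpec r F) (s : Multiset ℕ)
    (hs : (0 : ℕ) ∉ s) : untrop (F (mP ⟨s, hs⟩)) = thetaVal r s := by
  by_cases h0 : s = 0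
  · subst h0
    rw [mP_zero, map_one, untrop_one, thetaVal_zero]
  · rw [hF ⟨s, hs⟩ h0, thetaVal, if_neg h0]
    split_ifs <;> rfl

lemma thetaSpec.apply_p21 {r : ℝ≥0∞} {F : WL} (hF : thetaSpec r F) :
    F (mP p21) = trop ⊤ := by
  rw [hF p21 (by decide), if_neg (by decide)]

lemma eq_of_add_eq_pair_two_one {s t : Multiset ℕ} (h : s + t = {2, 1}) :
    (s = 0 ∧ t = {2, 1}) ∨ (s = {2} ∧ t = {1}) ∨ (s = {1} ∧ t = {2}) ∨ (s = {2, 1} ∧ t = 0) := by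
  have hmem : (s, t) ∈ Multiset.antidiagonal (2 ::ₘ 1 ::ₘ 0) := Multiset.mem_antidiagonal.mpr h
  rw [Multiset.antidiagonal_cons, Multiset.antidiagonal_cons, Multiset.antidiagonal_zero] at hmem
  simp only [Multiset.map_singleton, Multiset.map_add, Multiset.mem_add, Multiset.mem_singleton,
    Prod.map, Prod.mk.injEq, id, Multiset.cons_zero] at hmem
  tauto

lemma waddF_apply_p21_of_thetaSpec (eqp : ℕ ≃ ℕ ⊕ ℕ) {r r' : ℝ≥0∞} {F G : WL}
    (hF : thetaSpec r F) (hG : thetaSpec r' G) :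
    waddF eqp F G (mP p21) = trop (min (2 * r + r') (r + 2 * r')) := by
  rw [waddF_mP]
  congr 1
  simp only [hF.untrop_apply_mP, hG.untrop_apply_mP]
  have hcard : ∀ q, thetaVal q {2, 1} = ⊤ := fun q => thetaVal_of_two_le_card q (by simp)
  apply le_antisymm
  · -- the terms `x₀² ⊗ x₀` and `x₀ ⊗ x₀²` of `Δ⁺(m_(2,1))`
    refine le_min (sInf_le ⟨(Finsupp.single 0 2).sumElim (Finsupp.single 0 1), ?_, ?_⟩)
      (sInf_le ⟨(Finsupp.single 0 1).sumElim (Finsupp.single 0 2), ?_, ?_⟩) <;>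
    simp only [lM_sumElim, rM_sumElim, parts_single 0 two_ne_zero, parts_single 0 one_ne_zero,
      thetaVal_singleton, Nat.cast_ofNat, Nat.cast_one, one_mul] <;> decide
  · refine le_sInf ?_
    rintro x ⟨e, he, rfl⟩
    rcases eq_of_add_eq_pair_two_one he with ⟨hs, ht⟩ | ⟨hs, ht⟩ | ⟨hs, ht⟩ | ⟨hs, ht⟩ <;>
      simp only [hs, ht, thetaVal_zero, hcard, thetaVal_singleton, Nat.cast_ofNat, Nat.cast_one,
        one_mul, zero_add, add_zero, le_top, min_le_left, min_le_right]

/-- `θ : 𝕃 → 𝕎(𝕃)` does not preserve addition: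
`(θ(r) ⊕ θ(r'))(m_(2,1)) = min {2r + r', r + 2r'}` while
`θ(min{r,r'})(m_(2,1)) = ∞`, so for finite `r, r'` these disagree and
`θ(min{r,r'}) ≠ θ(r) ⊕ θ(r')`; `θ` is only monoidal, not a rig homomorphism. -/
theorem theta_not_additive (eqp : ℕ ≃ ℕ ⊕ ℕ) (Θ : ℝ≥0∞ → WL)
    (hΘ : ∀ r, thetaSpec r (Θ r)) (r r' : ℝ≥0∞) :
    waddF eqp ⇑(Θ r) ⇑(Θ r') (mP p21) = trop (min (2 * r + r') (r + 2 * r')) ∧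
    Θ (min r r') (mP p21) = trop (⊤ : ℝ≥0∞) ∧
    (r ≠ ⊤ → r' ≠ ⊤ → waddF eqp ⇑(Θ r) ⇑(Θ r') ≠ ⇑(Θ (min r r'))) := by
  have hsum := waddF_apply_p21_of_thetaSpec eqp (hΘ r) (hΘ r')
  have hmin := (hΘ (min r r')).apply_p21
  refine ⟨hsum, hmin, fun hr hr' heq => ?_⟩
  have hfin : 2 * r + r' ≠ ⊤ :=
    ENNReal.add_ne_top.mpr ⟨ENNReal.mul_ne_top ENNReal.ofNat_ne_top hr, hr'⟩
  have htop : min (2 * r + r') (r + 2 * r') = ⊤ :=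
    trop_injective (hsum.symm.trans ((congrFun heq (mP p21)).trans hmin))
  exact hfin (min_eq_top.mp htop).1

end
end
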